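/- Let p be a prime and λ = (a,b) with a ≥ b ≥ 1. A p-ary design u of block size b on a set of size a+b is universal (i.e., a j-design for every j < b) if and only if u is a (b - p^l)-design for every l with 0 ≤ l ≤ l_p(b). -/

import Mathlib

lemma card_between {v : ℕ} (Z X : Finset (Fin v)) (t : ℕ) (hZX : Z ⊆ X) (hZt : Z.card ≤ t) :
    (Finset.univ.filter (fun W : Finset (Fin v) => Z ⊆ W ∧ W ⊆ X ∧ W.card = t)).card
      = Nat.choose (X.card - Z.card) (t - Z.card) := by
  rw [← Finset.card_sdiff_of_subset hZX, ← Finset.card_powersetCard]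
  apply Finset.card_nbij' (fun W => W \ Z) (fun V => V ∪ Z)
  · intro W hW
    simp only [Finset.mem_coe, Finset.mem_filter, Finset.mem_univ, true_and] at hW
    rw [Finset.mem_coe, Finset.mem_powersetCard]
    exact ⟨Finset.sdiff_subset_sdiff hW.2.1 le_rfl,
      by rw [Finset.card_sdiff_of_subset hW.1, hW.2.2]⟩
  · intro V hV
    rw [Finset.mem_coe, Finset.mem_powersetCard] at hV
    have hdisj : Disjoint V Z := Finset.disjoint_of_subset_left hV.1 Finset.sdiff_disjoint
    simp only [Finset.mem_coe, Finset.mem_filter, Finset.mem_univ, true_and]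
    refine ⟨Finset.subset_union_right, Finset.union_subset (hV.1.trans (Finset.sdiff_subset)) hZX, ?_⟩
    rw [Finset.card_union_of_disjoint hdisj, hV.2, Nat.sub_add_cancel hZt]
  · intro W hW
    simp only [Finset.mem_coe, Finset.mem_filter, Finset.mem_univ, true_and] at hW
    exact Finset.sdiff_union_of_subset hW.1
  · intro V hV
    rw [Finset.mem_coe, Finset.mem_powersetCard] at hV
    have hdisj : Disjoint V Z := Finset.disjoint_of_subset_left hV.1 Finset.sdiff_disjoint
    exact Finset.union_sdiff_cancel_right hdisj

lemma choose_pow_log_ne_zero (p : ℕ) (hp : p.Prime) (m : ℕ) (hm : m ≠ 0) :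
    ((Nat.choose m (p ^ Nat.log p m)) : ZMod p) ≠ 0 := by
  haveI := Fact.mk hp
  set l := Nat.log p m with hl
  have hppos : 0 < p := hp.pos
  have h := Choose.choose_modEq_choose_mul_prod_range_choose (n := m) (k := p ^ l) (p := p) l
  have h2 : ((Nat.choose m (p ^ l) : ℤ) : ZMod p)
      = ((Nat.choose (m / p ^ l) (p ^ l / p ^ l) *
          ∏ i ∈ Finset.range l, Nat.choose (m / p ^ i % p) (p ^ l / p ^ i % p) : ℤ) : ZMod p) :=
    (ZMod.intCast_eq_intCast_iff _ _ _).mpr h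
  have hprod : ∀ i ∈ Finset.range l, Nat.choose (m / p ^ i % p) (p ^ l / p ^ i % p) = 1 := by
    intro i hi
    rw [Finset.mem_range] at hi
    have h3 : p ^ l / p ^ i = p ^ (l - i) := Nat.pow_div hi.le hppos
    have hdvd : p ∣ p ^ (l - i) := dvd_pow_self p (by omega)
    rw [h3, Nat.mod_eq_zero_of_dvd hdvd, Nat.choose_zero_right]
  rw [Finset.prod_congr rfl hprod, Finset.prod_const_one,
    Nat.div_self (pow_pos hppos l), Nat.choose_one_right] at h2
  simp only [Int.cast_mul, Int.cast_natCast, Int.cast_one, Nat.cast_one, mul_one] at h2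
  rw [h2]
  have hle : p ^ l ≤ m := Nat.pow_log_le_self p hm
  have hlt : m < p ^ (l + 1) := Nat.lt_pow_succ_log_self hp.one_lt m
  have hpos : 0 < m / p ^ l := Nat.div_pos hle (pow_pos hppos l)
  have hltp : m / p ^ l < p := by
    rw [Nat.div_lt_iff_lt_mul (pow_pos hppos l)]
    calc m < p ^ (l + 1) := hlt
    _ = p * p ^ l := by ring
  intro hzero
  rw [ZMod.natCast_eq_zero_iff] at hzero
  have := Nat.eq_zero_of_dvd_of_lt hzero hltp
  omega

/-- `u` is a `p`-ary `t`-design of block size `b` on `[v]`: the sum of `u` over the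
`b`-subsets containing a fixed `t`-subset is a constant. -/
def IsDesign (p v b t : ℕ) (u : Finset (Fin v) → ZMod p) : Prop :=
  ∃ μ : ZMod p, ∀ Z : Finset (Fin v), Z.card = t →
    ∑ Y ∈ Finset.univ.filter (fun Y : Finset (Fin v) => Z ⊆ Y ∧ Y.card = b), u Y = μ

lemma descent {p v b s t : ℕ} (hp : p.Prime) (hst : s ≤ t)
    (hc : ((Nat.choose (b - s) (t - s)) : ZMod p) ≠ 0)
    (u : Finset (Fin v) → ZMod p) (h : IsDesign p v b t u) : IsDesign p v b s u := by
  haveI := Fact.mk hp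
  obtain ⟨μ, hμ⟩ := h
  set c : ZMod p := (Nat.choose (b - s) (t - s) : ZMod p) with hcdef
  refine ⟨c⁻¹ * ((Nat.choose (v - s) (t - s) : ZMod p) * μ), fun Z hZ => ?_⟩
  set A := Finset.univ.filter (fun W : Finset (Fin v) => Z ⊆ W ∧ W.card = t) with hA
  have key : c * ∑ Y ∈ Finset.univ.filter (fun Y : Finset (Fin v) => Z ⊆ Y ∧ Y.card = b), u Y
      = (Nat.choose (v - s) (t - s) : ZMod p) * μ := by
    have lhs1 : ∑ Z' ∈ A, ∑ Y ∈ Finset.univ.filter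
        (fun Y : Finset (Fin v) => Z' ⊆ Y ∧ Y.card = b), u Y
        = (Nat.choose (v - s) (t - s) : ZMod p) * μ := by
      rw [Finset.sum_congr rfl (fun Z' hZ' => hμ Z' (Finset.mem_filter.mp hZ').2.2),
        Finset.sum_const, nsmul_eq_mul]
      congr 2
      have hAeq : A = Finset.univ.filter
          (fun W : Finset (Fin v) => Z ⊆ W ∧ W ⊆ Finset.univ ∧ W.card = t) := by
        ext W; simp [hA, Finset.subset_univ]
      rw [hAeq, card_between Z Finset.univ t (Finset.subset_univ Z) (hZ ▸ hst),
        Finset.card_univ, Fintype.card_fin, hZ]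
    have lhs2 : ∑ Z' ∈ A, ∑ Y ∈ Finset.univ.filter
        (fun Y : Finset (Fin v) => Z' ⊆ Y ∧ Y.card = b), u Y
        = c * ∑ Y ∈ Finset.univ.filter (fun Y : Finset (Fin v) => Z ⊆ Y ∧ Y.card = b), u Y := by
      have step1 : ∀ Z' ∈ A, ∑ Y ∈ Finset.univ.filter
          (fun Y : Finset (Fin v) => Z' ⊆ Y ∧ Y.card = b), u Y
          = ∑ Y ∈ (Finset.univ : Finset (Finset (Fin v))),
              if Z' ⊆ Y ∧ Y.card = b then u Y else 0 :=
        fun Z' _ => Finset.sum_filter _ _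
      rw [Finset.sum_congr rfl step1, Finset.sum_comm]
      have step2 : ∀ Y ∈ (Finset.univ : Finset (Finset (Fin v))),
          (∑ Z' ∈ A, if Z' ⊆ Y ∧ Y.card = b then u Y else 0)
          = if Z ⊆ Y ∧ Y.card = b then (Nat.choose (b - s) (t - s)) • u Y else 0 := by
        intro Y _
        rw [← Finset.sum_filter, Finset.sum_const]
        by_cases hY : Z ⊆ Y ∧ Y.card = b
        · rw [if_pos hY]
          congr 1
          have : A.filter (fun Z' => Z' ⊆ Y ∧ Y.card = b)
              = Finset.univ.filter (fun W : Finset (Fin v) => Z ⊆ W ∧ W ⊆ Y ∧ W.card = t) := by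
            ext W
            simp only [hA, Finset.mem_filter, Finset.mem_univ, true_and]
            tauto
          rw [this, card_between Z Y t hY.1 (hZ ▸ hst), hY.2, hZ]
        · rw [if_neg hY]
          convert zero_smul ℕ (u Y)
          rw [Finset.card_eq_zero, Finset.filter_eq_empty_iff]
          intro W hW
          simp only [hA, Finset.mem_filter, Finset.mem_univ, true_and] at hW
          intro hcon
          exact hY ⟨hW.1.trans hcon.1, hcon.2⟩
      rw [Finset.sum_congr rfl step2, ← Finset.sum_filter, Finset.mul_sum]
      exact Finset.sum_congr rfl (fun Y _ => nsmul_eq_mul _ _)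
    rw [← lhs2, lhs1]
  rw [← key, inv_mul_cancel_left₀ hc]

/-- A `p`-ary design of block size `b` on a set of size `a + b` is universal if and
only if it is a `(b - p^l)`-design for every `l ≤ l_p(b)`. -/
theorem universal_iff (p a b : ℕ) (hp : p.Prime) (hb : 1 ≤ b) (hba : b ≤ a)
    (u : Finset (Fin (a + b)) → ZMod p) :
    (∀ j < b, IsDesign p (a + b) b j u) ↔
      ∀ l ≤ Nat.log p b, IsDesign p (a + b) b (b - p ^ l) u := by
  constructor
  · intro H l _
    have h1 : 1 ≤ p ^ l := Nat.one_le_pow l p hp.pos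
    exact H (b - p ^ l) (by omega)
  · intro H j hj
    set m := b - j with hmdef
    have hm : m ≠ 0 := by omega
    set l := Nat.log p m with hldef
    have hlb : l ≤ Nat.log p b := Nat.log_mono_right (Nat.sub_le _ _)
    have hpl : p ^ l ≤ m := Nat.pow_log_le_self p hm
    have hdes := H l hlb
    refine descent hp (show j ≤ b - p ^ l by omega) ?_ u hdes
    rw [show b - j = m from rfl, show b - p ^ l - j = m - p ^ l by omega,
      Nat.choose_symm hpl]
    exact choose_pow_log_ne_zero p hp m hm
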